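/- Let X be a finite group of order coprime to the characteristic ℓ of a field, and let J be a finite-dimensional nilpotent ideal of a commutative algebra over a complete local ring with residue characteristic ℓ. Then for every i ≥ 1, the group cohomology H^i(X, 1 + J) vanishes, where 1 + J is the multiplicative group {1 + j : j ∈ J}. -/

import Mathlib

open IsLocalRing

/-- The multiplicative group `1 + J` of a (nilpotent) ideal `J` of a commutative ring `R`,
realized as the subgroup of `Rˣ` consisting of the units `u` with `u - 1 ∈ J`. -/
def oneAddIdeal {R : Type*} [CommRing R] (J : Ideal R) : Subgroup Rˣ where
  carrier := { u | (u : R) - 1 ∈ J }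
  one_mem' := by simp
  mul_mem' := by
    intro a b ha hb
    have h : ((a * b : Rˣ) : R) - 1 = (a : R) * ((b : R) - 1) + ((a : R) - 1) := by
      push_cast; ring
    rw [Set.mem_setOf_eq, h]
    exact J.add_mem (J.mul_mem_left _ hb) ha
  inv_mem' := by
    intro a ha
    have h1 : ((a⁻¹ : Rˣ) : R) * (a : R) = 1 := by
      rw [← Units.val_mul, inv_mul_cancel, Units.val_one]
    have h : ((a⁻¹ : Rˣ) : R) - 1 = -(((a⁻¹ : Rˣ) : R) * ((a : R) - 1)) := by
      rw [mul_sub, h1]; ring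
    rw [Set.mem_setOf_eq, h]
    exact J.neg_mem (J.mul_mem_left _ ha)

/-! Since `1 + J` is abelian, multiplication by `N = |X|` on it is the `N`-th power map, and this
map is bijective: `N` is a unit of `𝒪`, hence of `R`, so Newton's method for `T ^ N - w` started
at `1` has a unique root congruent to `1` modulo nilpotents, and reducing modulo `J` shows that the
root lies in `1 + J`. Cohomology of a finite group `G` with coefficients on which `|G|` acts
bijectively vanishes in positive degrees: summing an `(n+1)`-cocycle `f` over its last variable
gives an `n`-cochain with coboundary `± |G| • f`. -/

theorem Ideal.isNilpotent_of_mem {R : Type*} [CommRing R] {J : Ideal R} (hJ : IsNilpotent J)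
    {x : R} (hx : x ∈ J) : IsNilpotent x := by
  obtain ⟨m, hm⟩ := hJ
  exact ⟨m, by simpa [hm] using Ideal.pow_mem_pow hx m⟩

theorem IsLocalRing.isUnit_natCast_of_coprime {𝒪 : Type*} [CommRing 𝒪] [IsLocalRing 𝒪]
    {ℓ : ℕ} [CharP (ResidueField 𝒪) ℓ] {N : ℕ} (h : N.Coprime ℓ) : IsUnit (N : 𝒪) := by
  rw [← residue_ne_zero_iff_isUnit, map_natCast, Ne, CharP.cast_eq_zero_iff _ ℓ]
  exact fun hdvd ↦ CharP.char_ne_one (ResidueField 𝒪) ℓ (h.symm.eq_one_of_dvd hdvd)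

section NthRoots

variable {R : Type*} [CommRing R] {N : ℕ}

open Polynomial in
theorem existsUnique_pow_eq_of_isNilpotent (hN : IsUnit (N : R)) {w : R}
    (hw : IsNilpotent (1 - w)) : ∃! r : R, IsNilpotent (1 - r) ∧ r ^ N = w := by
  have h := existsUnique_nilpotent_sub_and_aeval_eq_zero (P := X ^ N - C w) (x := (1 : R))
    (by simpa using hw) (by simpa [derivative_X_pow] using hN)
  simpa only [map_sub, map_pow, aeval_X, aeval_C, Algebra.algebraMap_self, RingHom.id_apply,
    sub_eq_zero] using h

theorem sub_one_mem_of_pow_eq {J : Ideal R} (hN : IsUnit (N : R)) {r w : R}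
    (hr : IsNilpotent (1 - r)) (hrw : r ^ N = w) (hw : w - 1 ∈ J) : r - 1 ∈ J := by
  -- in `R ⧸ J`, both `r` and `1` are `N`-th roots of `1` that are `1` up to a nilpotent
  rw [← Ideal.Quotient.eq, map_one]
  refine (existsUnique_pow_eq_of_isNilpotent (hN.map (Ideal.Quotient.mk J))
    (w := 1) (by simp)).unique ⟨?_, ?_⟩ ⟨by simp, one_pow N⟩
  · simpa using hr.map (Ideal.Quotient.mk J)
  · rw [← map_pow, hrw, ← map_one (Ideal.Quotient.mk J), Ideal.Quotient.eq]
    exact hw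

theorem bijective_pow_oneAddIdeal {J : Ideal R} (hJ : IsNilpotent J) (hN : IsUnit (N : R)) :
    Function.Bijective (fun u : oneAddIdeal J ↦ u ^ N) := by
  have nil : ∀ u : oneAddIdeal J, IsNilpotent (1 - ((u : Rˣ) : R)) := fun u ↦ by
    simpa [neg_sub] using (Ideal.isNilpotent_of_mem hJ u.2).neg
  refine ⟨fun u v huv ↦ ?_, fun w ↦ ?_⟩
  · have hpow : ((u : Rˣ) : R) ^ N = ((v : Rˣ) : R) ^ N := by
      simpa using congr_arg (fun x : oneAddIdeal J ↦ ((x : Rˣ) : R)) huv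
    have := (existsUnique_pow_eq_of_isNilpotent hN (by simpa using nil (v ^ N))).unique
      ⟨nil u, hpow⟩ ⟨nil v, rfl⟩
    exact Subtype.ext (Units.ext this)
  · obtain ⟨r, ⟨hr, hrw⟩, -⟩ := existsUnique_pow_eq_of_isNilpotent hN (nil w)
    have hrJ : r - 1 ∈ J := sub_one_mem_of_pow_eq hN hr hrw w.2
    have hunit : IsUnit r := by
      simpa using (Ideal.isNilpotent_of_mem hJ hrJ).isUnit_one_add
    exact ⟨⟨hunit.unit, hrJ⟩, Subtype.ext (Units.ext (by simpa using hrw))⟩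

end NthRoots

namespace Fin

variable {α : Type*} {n : ℕ}

theorem tail_snoc (g : Fin (n + 1) → α) (s : α) :
    tail (snoc g s : Fin (n + 2) → α) = snoc (tail g) s := by
  funext i
  refine lastCases ?_ (fun j ↦ ?_) i
  · simp [tail, succ_last]
  · simp only [tail, snoc_castSucc, succ_castSucc]

theorem contractNth_castSucc_snoc {j : Fin (n + 1)} (hj : j ≠ last n) (op : α → α → α)
    (x : Fin (n + 1) → α) (s : α) :
    contractNth j.castSucc op (snoc x s) = snoc (contractNth j op x) s := by
  have hj' : (j : ℕ) < n := val_lt_last hj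
  funext i
  refine lastCases ?_ (fun k ↦ ?_) i
  · rw [snoc_last, contractNth_apply_of_gt _ _ _ _ (by simpa using hj'), succ_last, snoc_last]
  · rcases lt_trichotomy (k : ℕ) j with h | h | h
    · rw [snoc_castSucc, contractNth_apply_of_lt _ _ _ _ (by simpa using h),
        contractNth_apply_of_lt _ _ _ _ h, snoc_castSucc]
    · rw [snoc_castSucc, contractNth_apply_of_eq _ _ _ _ (by simpa using h),
        contractNth_apply_of_eq _ _ _ _ h, succ_castSucc, snoc_castSucc, snoc_castSucc]
    · rw [snoc_castSucc, contractNth_apply_of_gt _ _ _ _ (by simpa using h),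
        contractNth_apply_of_gt _ _ _ _ h, succ_castSucc, snoc_castSucc]

theorem contractNth_castSucc_last_snoc (op : α → α → α) (x : Fin (n + 1) → α) (s : α) :
    contractNth (last n).castSucc op (snoc x s) =
      snoc (contractNth (last n) op x) (op (x (last n)) s) := by
  funext i
  refine lastCases ?_ (fun k ↦ ?_) i
  · rw [snoc_last, contractNth_apply_of_eq _ _ _ _ (by simp), snoc_castSucc, succ_last,
      snoc_last]
  · rw [snoc_castSucc, contractNth_apply_of_lt _ _ _ _ (by simp),
      contractNth_apply_of_lt _ _ _ _ (by simp), snoc_castSucc]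

theorem contractNth_last_snoc (op : α → α → α) (x : Fin (n + 1) → α) (s : α) :
    contractNth (last (n + 1)) op (snoc x s) = x := by
  funext i
  rw [contractNth_apply_of_lt _ _ _ _ (by simpa using i.isLt), snoc_castSucc]

end Fin

universe u

open inhomogeneousCochains

namespace groupCohomology

variable {k G : Type u} [CommRing k] [Group G] {A : Rep k G} {n : ℕ}

theorem d_apply_snoc (f : (Fin (n + 1) → G) → A) (g : Fin (n + 1) → G) (s : G) :
    d A (n + 1) f (Fin.snoc g s) =
      A.ρ (g 0) (f (Fin.snoc (Fin.tail g) s)) +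
        ∑ j : Fin (n + 1),
          (-1 : k) ^ ((j : ℕ) + 1) • f (Fin.contractNth j.castSucc (· * ·) (Fin.snoc g s)) +
        (-1 : k) ^ (n + 2) • f g := by
  rw [d_hom_apply, Fin.sum_univ_castSucc, Fin.snoc_apply_zero, ← add_assoc]
  simp only [Fin.val_castSucc, Fin.val_last, Fin.contractNth_last_snoc, ← Fin.tail_snoc]
  rfl

theorem sum_d_apply_snoc [Fintype G] (f : (Fin (n + 1) → G) → A) (g : Fin (n + 1) → G) :
    ∑ s, d A (n + 1) f (Fin.snoc g s) =
      d A n (fun x ↦ ∑ s, f (Fin.snoc x s)) g + (-1 : k) ^ (n + 2) • Fintype.card G • f g := by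
  have inner (j : Fin (n + 1)) :
      ∑ s, f (Fin.contractNth j.castSucc (· * ·) (Fin.snoc g s)) =
        ∑ s, f (Fin.snoc (Fin.contractNth j (· * ·) g) s) := by
    by_cases hj : j = Fin.last n
    · subst hj
      simp only [Fin.contractNth_castSucc_last_snoc]
      exact Fintype.sum_equiv (Equiv.mulLeft (g (Fin.last n))) _ _ fun _ ↦ rfl
    · simp only [Fin.contractNth_castSucc_snoc hj]
  rw [Fintype.sum_congr _ _ (d_apply_snoc f g)]
  simp only [Finset.sum_add_distrib, ← map_sum, Finset.sum_const, Finset.card_univ]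
  rw [Finset.sum_comm]
  simp only [← Finset.smul_sum, inner, d_hom_apply, smul_comm (Fintype.card G)]
  rfl

theorem d_smul_sum_snoc_of_d_eq_zero [Fintype G] {f : (Fin (n + 1) → G) → A}
    (hf : d A (n + 1) f = 0) :
    d A n ((-1 : k) ^ (n + 1) • fun x ↦ ∑ s, f (Fin.snoc x s)) = Fintype.card G • f := by
  funext g
  have h := sum_d_apply_snoc f g
  rw [Fintype.sum_eq_zero _ fun s ↦ by rw [hf]; rfl] at h
  rw [map_smul, Pi.smul_apply, eq_neg_of_add_eq_zero_left h.symm, smul_neg, smul_smul,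
    ← pow_add, Odd.neg_one_pow ⟨n + 1, by ring⟩, neg_one_smul, neg_neg, Pi.smul_apply]

theorem exists_d_eq_of_d_eq_zero [Fintype G]
    (hA : Function.Bijective fun a : A ↦ Fintype.card G • a) {f : (Fin (n + 1) → G) → A}
    (hf : d A (n + 1) f = 0) : ∃ p, d A n p = f := by
  choose p hp using fun x ↦ hA.2 (((-1 : k) ^ (n + 1) • fun x ↦ ∑ s, f (Fin.snoc x s)) x)
  refine ⟨p, funext fun g ↦ hA.1 ?_⟩
  have hNp : Fintype.card G • p = (-1 : k) ^ (n + 1) • fun x ↦ ∑ s, f (Fin.snoc x s) :=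
    funext hp
  calc Fintype.card G • d A n p g = d A n (Fintype.card G • p) g := by rw [map_nsmul]; rfl
    _ = Fintype.card G • f g := by rw [hNp, d_smul_sum_snoc_of_d_eq_zero hf]; rfl

theorem subsingleton_of_bijective_nsmul_card [Fintype G]
    (hA : Function.Bijective fun a : A ↦ Fintype.card G • a) {i : ℕ} (hi : 1 ≤ i) :
    Subsingleton (groupCohomology A i) := by
  obtain ⟨n, rfl⟩ := Nat.exists_eq_add_of_le' hi
  refine ModuleCat.subsingleton_of_isZero
    ((HomologicalComplex.exactAt_iff_isZero_homology _ _).mp ?_)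
  rw [HomologicalComplex.exactAt_iff' _ n (n + 1) (n + 2) (by simp) (by simp),
    CategoryTheory.ShortComplex.moduleCat_exact_iff]
  intro f (hf : (inhomogeneousCochains A).d (n + 1) (n + 2) f = 0)
  rw [inhomogeneousCochains.d_def] at hf
  obtain ⟨p, hp⟩ := exists_d_eq_of_d_eq_zero hA hf
  exact ⟨p, by rwa [← inhomogeneousCochains.d_def] at hp⟩

end groupCohomology

theorem stmt1_general {ℓ : ℕ}
    {𝒪 : Type} [CommRing 𝒪] [IsLocalRing 𝒪]
    [CharP (IsLocalRing.ResidueField 𝒪) ℓ]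
    {R : Type} [CommRing R] [Algebra 𝒪 R]
    {X : Type} [Group X] [Fintype X] (hX : (Fintype.card X).Coprime ℓ)
    (J : Ideal R) (hnil : IsNilpotent J)
    (ρ : Representation ℤ X (Additive ↥(oneAddIdeal J)))
    (i : ℕ) (hi : 1 ≤ i) :
    Subsingleton (groupCohomology (Rep.of ρ) i) := by
  have hN : IsUnit (Fintype.card X : R) := by
    simpa using (isUnit_natCast_of_coprime (𝒪 := 𝒪) hX).map (algebraMap 𝒪 R)
  have hpow := bijective_pow_oneAddIdeal hnil hN
  exact groupCohomology.subsingleton_of_bijective_nsmul_card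
    ((Additive.ofMul.bijective.comp hpow).comp Additive.toMul.bijective) hi

/-- Let `X` be a finite group of order coprime to the residue
characteristic `ℓ` of a complete local ring `𝒪`, and let `J` be a finite-dimensional
nilpotent ideal of a commutative `𝒪`-algebra `R`, stable under an action of `X` on `R`
by ring automorphisms.  Then for every `i ≥ 1` the group cohomology `Hⁱ(X, 1 + J)`
vanishes, where `1 + J = {1 + j : j ∈ J}` is regarded as a group under multiplication
(with the `X`-action `ρ` induced by the action of `X` on `R`). -/
theorem stmt1 {ℓ : ℕ} [Fact ℓ.Prime]
    {𝒪 : Type} [CommRing 𝒪] [IsLocalRing 𝒪]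
    [IsAdicComplete (IsLocalRing.maximalIdeal 𝒪) 𝒪]
    [CharP (IsLocalRing.ResidueField 𝒪) ℓ]
    {R : Type} [CommRing R] [Algebra 𝒪 R]
    {X : Type} [Group X] [Fintype X] (hX : (Fintype.card X).Coprime ℓ)
    [MulSemiringAction X R]
    (J : Ideal R) [Module.Finite 𝒪 ↥J] (hnil : IsNilpotent J)
    (hJstable : ∀ (x : X), ∀ r ∈ J, x • r ∈ J)
    (ρ : Representation ℤ X (Additive ↥(oneAddIdeal J)))
    (hρ : ∀ (x : X) (u : ↥(oneAddIdeal J)),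
      ((((ρ x (Additive.ofMul u)).toMul : ↥(oneAddIdeal J)) : Rˣ) : R) = x • (((u : Rˣ)) : R))
    (i : ℕ) (hi : 1 ≤ i) :
    Subsingleton (groupCohomology (Rep.of ρ) i) :=
  stmt1_general (𝒪 := 𝒪) hX J hnil ρ i hi
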